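/- arXiv:1805.09891 — 2 statements merged into one kernel-verified Lean document; each statement's English description precedes it below -/
import Mathlib

section
/- Let x : Fin N → ℂ with N = N₁·N₂, and define the DFT Z_k = Σ_{n=0}^{N-1} ω_N^{nk} x_n with ω_N = exp(2πi/N). Then for all k₁ < N₁ and k₂ < N₂, Z_{k₁N₂+k₂} = Σ_{n₁=0}^{N₁-1} ω_{N₁}^{n₁k₁} · (ω_N^{n₁k₂} · Σ_{n₂=0}^{N₂-1} ω_{N₂}^{n₂k₂} x_{n₂N₁+n₁}). -/
open Complex Real Finset

theorem cooley_tukey_factorization (N₁ N₂ : ℕ) (h1 : 0 < N₁) (h2 : 0 < N₂)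
    (x : Fin (N₁ * N₂) → ℂ) (k₁ k₂ : ℕ) (hk1 : k₁ < N₁) (hk2 : k₂ < N₂) :
    (∑ n : Fin (N₁ * N₂),
        Complex.exp (2 * Real.pi * Complex.I / ((N₁ * N₂ : ℕ) : ℂ)) ^ ((n : ℕ) * (k₁ * N₂ + k₂)) * x n) =
      ∑ n₁ : Fin N₁,
        Complex.exp (2 * Real.pi * Complex.I / ((N₁ : ℕ) : ℂ)) ^ ((n₁ : ℕ) * k₁) *
          (Complex.exp (2 * Real.pi * Complex.I / ((N₁ * N₂ : ℕ) : ℂ)) ^ ((n₁ : ℕ) * k₂) *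
            ∑ n₂ : Fin N₂,
              Complex.exp (2 * Real.pi * Complex.I / ((N₂ : ℕ) : ℂ)) ^ ((n₂ : ℕ) * k₂) *
                x ⟨(n₂ : ℕ) * N₁ + (n₁ : ℕ), by
                  have ha := n₁.isLt
                  have hb := n₂.isLt
                  nlinarith⟩) := by
  set ω : ℂ := Complex.exp (2 * Real.pi * Complex.I / ((N₁ * N₂ : ℕ) : ℂ)) with hω
  have hN1 : ((N₁ : ℂ)) ≠ 0 := Nat.cast_ne_zero.mpr h1.ne'
  have hN2 : ((N₂ : ℂ)) ≠ 0 := Nat.cast_ne_zero.mpr h2.ne'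
  have hωN1 : ω ^ N₂ = Complex.exp (2 * Real.pi * Complex.I / ((N₁ : ℕ) : ℂ)) := by
    rw [hω, ← Complex.exp_nat_mul]
    congr 1
    push_cast
    field_simp
  have hωN2 : ω ^ N₁ = Complex.exp (2 * Real.pi * Complex.I / ((N₂ : ℕ) : ℂ)) := by
    rw [hω, ← Complex.exp_nat_mul]
    congr 1
    push_cast
    field_simp
  have hroot : ω ^ (N₁ * N₂) = 1 := by
    rw [hω, ← Complex.exp_nat_mul]
    rw [div_eq_mul_inv, ← mul_assoc, mul_comm ((N₁*N₂:ℕ):ℂ), mul_assoc,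
      mul_inv_cancel₀ (Nat.cast_ne_zero.mpr (by positivity) : ((N₁*N₂:ℕ):ℂ) ≠ 0), mul_one]
    exact Complex.exp_two_pi_mul_I
  let e : Fin N₂ × Fin N₁ ≃ Fin (N₁ * N₂) :=
    finProdFinEquiv.trans (finCongr (Nat.mul_comm N₂ N₁))
  rw [← Equiv.sum_comp e, Fintype.sum_prod_type, Finset.sum_comm]
  rw [← hωN1, ← hωN2]
  apply Finset.sum_congr rfl
  intro n₁ _
  rw [Finset.mul_sum, Finset.mul_sum]
  apply Finset.sum_congr rfl
  intro n₂ _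
  have he : ((e (n₂, n₁) : ℕ)) = (n₂ : ℕ) * N₁ + (n₁ : ℕ) := by
    simp [e, finProdFinEquiv]
    ring
  have hx : x (e (n₂, n₁)) = x ⟨(n₂ : ℕ) * N₁ + (n₁ : ℕ), by
      have ha := n₁.isLt; have hb := n₂.isLt; nlinarith⟩ := by
    congr 1
    exact Fin.ext he
  rw [hx, he]
  rw [show ((n₂:ℕ) * N₁ + (n₁:ℕ)) * (k₁ * N₂ + k₂)
      = (N₁ * N₂) * ((n₂:ℕ) * k₁) + N₂ * ((n₁:ℕ) * k₁) + (n₁:ℕ) * k₂ + N₁ * ((n₂:ℕ) * k₂) by ring]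
  rw [pow_add, pow_add, pow_add, pow_mul ω (N₁*N₂), hroot, one_pow, one_mul, pow_mul ω N₂, pow_mul ω N₁]
  ring
end

section
/- For positive reals α, β, n and positive integers p, r with r ≤ p and r ∣ p: (√(⌈log₂(p/r)⌉·α) + √(n·β))² + (log₂ r)·α + (r−1)·n·β ≤ 2(⌈log₂ p⌉·α + r·n·β). -/
/-!
Squaring costs at most a factor two, `(√a + √b)² ≤ 2(a + b)`, so it suffices to show
`2⌈log₂ k⌉ + log₂ r ≤ 2⌈log₂ (k r)⌉` for `p = k r`. For `r = 1` this is an equality. For `r ≥ 2`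
add `⌈log₂ k⌉ + 1 ≤ ⌈log₂ (2k)⌉ ≤ ⌈log₂ (k r)⌉` to
`⌈log₂ k⌉ + log₂ r < log₂ k + log₂ r + 1 = log₂ (k r) + 1 ≤ ⌈log₂ (k r)⌉ + 1`.
-/

open Real

theorem Nat.clog_base_mul {b : ℕ} (hb : 1 < b) {n : ℕ} (hn : 0 < n) :
    Nat.clog b (b * n) = Nat.clog b n + 1 := by
  apply le_antisymm
  · rw [Nat.clog_le_iff_le_pow hb, pow_succ']
    exact Nat.mul_le_mul_left b (Nat.le_pow_clog hb n)
  · have hpos : 0 < Nat.clog b (b * n) := Nat.clog_pos hb (by nlinarith)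
    obtain ⟨c, hc⟩ := Nat.exists_eq_add_one_of_ne_zero hpos.ne'
    have hle : b * n ≤ b * b ^ c :=
      calc b * n ≤ b ^ Nat.clog b (b * n) := Nat.le_pow_clog hb _
        _ = b * b ^ c := by rw [hc, pow_succ']
    rw [hc, add_le_add_iff_right, Nat.clog_le_iff_le_pow hb]
    exact Nat.le_of_mul_le_mul_left hle (by omega)

theorem Real.logb_natCast_le_clog (b n : ℕ) : logb b n ≤ Nat.clog b n := by
  rw [← natCeil_logb_natCast]
  exact Nat.le_ceil _

theorem Real.clog_lt_logb_natCast_add_one {b : ℕ} (hb : 1 < b) (n : ℕ) :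
    (Nat.clog b n : ℝ) < logb b n + 1 := by
  rw [← natCeil_logb_natCast]
  rcases n.eq_zero_or_pos with rfl | hn
  · simp
  · exact Nat.ceil_lt_add_one (logb_nonneg (by exact_mod_cast hb) (by exact_mod_cast hn))

theorem two_mul_clog_add_logb_le_two_mul_clog_mul {r k : ℕ} (hr : 0 < r) (hk : 0 < k) :
    2 * (Nat.clog 2 k : ℝ) + logb 2 r ≤ 2 * Nat.clog 2 (r * k) := by
  rcases (Nat.one_le_iff_ne_zero.mpr hr.ne').eq_or_lt with rfl | hr2
  · simp
  have hsucc : Nat.clog 2 k + 1 ≤ Nat.clog 2 (r * k) := by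
    rw [← Nat.clog_base_mul one_lt_two hk]
    exact Nat.clog_mono_right 2 (Nat.mul_le_mul_right k hr2)
  have hlogb : logb 2 (r * k : ℕ) = logb 2 r + logb 2 k := by
    push_cast
    exact logb_mul (by positivity) (by positivity)
  have hupper : logb 2 (r * k : ℕ) ≤ Nat.clog 2 (r * k) := by
    exact_mod_cast logb_natCast_le_clog 2 (r * k)
  have hlower : (Nat.clog 2 k : ℝ) < logb 2 k + 1 := by
    exact_mod_cast clog_lt_logb_natCast_add_one one_lt_two k
  have hsucc' : (Nat.clog 2 k : ℝ) + 1 ≤ Nat.clog 2 (r * k) := by exact_mod_cast hsucc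
  linarith

theorem Real.sqrt_add_sqrt_sq_le {x y : ℝ} (hx : 0 ≤ x) (hy : 0 ≤ y) :
    (√x + √y) ^ 2 ≤ 2 * (x + y) := by
  simpa [sq_sqrt hx, sq_sqrt hy] using add_sq_le (a := √x) (b := √y)

theorem multi_broadcast_upper_bound_general (α β n : ℝ) (hα : 0 < α) (hβ : 0 < β)
    (hn : 0 < n) (p r : ℕ) (hp : 0 < p) (hdvd : r ∣ p) :
    (Real.sqrt ((Nat.clog 2 (p / r) : ℝ) * α) + Real.sqrt (n * β)) ^ 2 +
        Real.logb 2 (r : ℝ) * α + ((r : ℝ) - 1) * n * β ≤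
      2 * ((Nat.clog 2 p : ℝ) * α + (r : ℝ) * n * β) := by
  have hr : 0 < r := Nat.pos_of_dvd_of_pos hdvd hp
  obtain ⟨k, rfl⟩ := hdvd
  have hk : 0 < k := Nat.pos_of_mul_pos_left hp
  rw [Nat.mul_div_cancel_left k hr]
  have hr1 : (1 : ℝ) ≤ r := by exact_mod_cast hr
  have hnβ : 0 ≤ n * β := by positivity
  calc _ ≤ 2 * ((Nat.clog 2 k : ℝ) * α + n * β) + logb 2 r * α + ((r : ℝ) - 1) * n * β := by
        gcongr
        exact sqrt_add_sqrt_sq_le (by positivity) hnβ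
    _ = (2 * (Nat.clog 2 k : ℝ) + logb 2 r) * α + ((r : ℝ) + 1) * (n * β) := by ring
    _ ≤ 2 * (Nat.clog 2 (r * k) : ℝ) * α + 2 * r * (n * β) := by
        gcongr
        · exact two_mul_clog_add_logb_le_two_mul_clog_mul hr hk
        · linarith
    _ = _ := by ring

theorem multi_broadcast_upper_bound (α β n : ℝ) (hα : 0 < α) (hβ : 0 < β)
    (hn : 0 < n) (p r : ℕ) (hp : 0 < p) (hr : 0 < r) (hrp : r ≤ p) (hdvd : r ∣ p) :
    (Real.sqrt ((Nat.clog 2 (p / r) : ℝ) * α) + Real.sqrt (n * β)) ^ 2 +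
        Real.logb 2 (r : ℝ) * α + ((r : ℝ) - 1) * n * β ≤
      2 * ((Nat.clog 2 p : ℝ) * α + (r : ℝ) * n * β) :=
  multi_broadcast_upper_bound_general α β n hα hβ hn p r hp hdvd
end
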